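/- Let I = {i}, O = {o1, o2}, and let M2 be the TFSM with timed guards with single state q0 (initial) and transitions (q0, i, [0,2], o1, q0) and (q0, i, (2,∞), o2, q0). Then there is no complete deterministic TFSM with timeouts whose behavior equals the behavior of M2; i.e., the behavior of M2 cannot be described by any TFSM with timeouts. -/
import Mathlib


open scoped Classical

namespace TFSMPaper

/-- A guard: an interval with integer (natural) endpoints; `hi = none` means `∞`;
`lclosed`/`rclosed` say whether the left/right delimiter is closed. -/
structure Guard where
  lo : ℕ
  hi : Option ℕ
  lclosed : Bool
  rclosed : Bool
deriving DecidableEq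

/-- Membership of a real clock value in a guard. -/
def Guard.mem (g : Guard) (x : ℝ) : Prop :=
  (if g.lclosed then (g.lo : ℝ) ≤ x else (g.lo : ℝ) < x) ∧
  (match g.hi with
    | none => True
    | some n => if g.rclosed then x ≤ (n : ℝ) else x < (n : ℝ))

/-- `J ⊆ g` as subsets of nonnegative reals. -/
def Guard.subset (J g : Guard) : Prop := ∀ x : ℝ, 0 ≤ x → J.mem x → g.mem x

/-- A guard is left-closed and right-open. -/
def Guard.LCRO (g : Guard) : Prop := g.lclosed = true ∧ g.rclosed = false

/-- The point interval `[n,n]`. -/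
def ptG (n : ℕ) : Guard := ⟨n, some n, true, true⟩

/-- The open interval `(n,n+1)`. -/
def opG (n : ℕ) : Guard := ⟨n, some (n + 1), false, false⟩

/-- The unbounded interval `(N,∞)`. -/
def infG (N : ℕ) : Guard := ⟨N, none, false, false⟩

/-- The set `𝕀_N` of abstract intervals. -/
def IN (N : ℕ) : Set Guard :=
  {g | (∃ n ≤ N, g = ptG n) ∨ (∃ n < N, g = opG n) ∨ g = infG N}

/-- All integer constants appearing in `g` are at most `N`. -/
def Guard.boundedBy (g : Guard) (N : ℕ) : Prop :=
  g.lo ≤ N ∧ ∀ n, g.hi = some n → n ≤ N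

/-- A timed word: strictly increasing, nonnegative timestamps. -/
def IsTimedWord {A : Type*} (v : List (A × ℝ)) : Prop :=
  v.Chain' (fun p q => p.2 < q.2) ∧ ∀ p ∈ v, (0 : ℝ) ≤ p.2

/-- Delete the timestamps of a timed word. -/
def untime {A : Type*} (v : List (A × ℝ)) : List A := v.map Prod.fst

/-! ### Untimed FSMs -/

/-- An untimed FSM with input alphabet `Γi`, output alphabet `Γo` and states `R`. -/
structure FSM (Γi Γo R : Type*) where
  trans : R → Γi → Γo → R → Prop
  init : R

/-- `Run U r v w r'`: from state `r`, reading input word `v`, `U` can produce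
output word `w` and reach `r'`. -/
inductive FSM.Run {Γi Γo R : Type*} (U : FSM Γi Γo R) : R → List Γi → List Γo → R → Prop
  | nil (r : R) : FSM.Run U r [] [] r
  | cons {r r' rf : R} {a : Γi} {b : Γo} {v : List Γi} {w : List Γo} :
      U.trans r a b r' → FSM.Run U r' v w rf → FSM.Run U r (a :: v) (b :: w) rf

/-- The behavior of `U`: `w ∈ B_U(v)`. -/
def FSM.Produces {Γi Γo R : Type*} (U : FSM Γi Γo R) (v : List Γi) (w : List Γo) : Prop :=
  ∃ rf, U.Run U.init v w rf

def FSM.Complete {Γi Γo R : Type*} (U : FSM Γi Γo R) : Prop :=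
  ∀ r a, ∃ b r', U.trans r a b r'

def FSM.Deterministic {Γi Γo R : Type*} (U : FSM Γi Γo R) : Prop :=
  ∀ r a b b' r' r'', U.trans r a b r' → U.trans r a b' r'' → b = b' ∧ r' = r''

/-! ### TFSMs with timed guards -/

/-- A TFSM with timed guards. -/
structure TFSMG (S I O : Type*) where
  trans : S → I → Guard → O → S → Prop
  init : S

/-- Input/output transition `(s,x) →(i,o) (s',0)`: some transition with a guard
containing the current clock value `x` fires. -/
def TFSMG.IOTrans {S I O : Type*} (M : TFSMG S I O) (s : S) (x : ℝ) (i : I) (o : O)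
    (s' : S) : Prop :=
  ∃ g, M.trans s i g o s' ∧ g.mem x

/-- `RunFrom M s t v w s'`: starting in state `s` (clock 0) at absolute time `t`,
reading the timed input word `v`, `M` produces the timed output word `w`
(outputs are instantaneous) and reaches `s'`. -/
inductive TFSMG.RunFrom {S I O : Type*} (M : TFSMG S I O) :
    S → ℝ → List (I × ℝ) → List (O × ℝ) → S → Prop
  | nil (s : S) (t : ℝ) : TFSMG.RunFrom M s t [] [] s
  | cons {s s' sf : S} {t t' : ℝ} {i : I} {o : O} {v : List (I × ℝ)} {w : List (O × ℝ)} :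
      M.IOTrans s (t' - t) i o s' → TFSMG.RunFrom M s' t' v w sf →
      TFSMG.RunFrom M s t ((i, t') :: v) ((o, t') :: w) sf

/-- The behavior of `M`: `w ∈ B_M(v)`. -/
def TFSMG.Produces {S I O : Type*} (M : TFSMG S I O) (v : List (I × ℝ))
    (w : List (O × ℝ)) : Prop :=
  ∃ sf, M.RunFrom M.init 0 v w sf

/-- Completeness: in every state, for every input and clock value, some transition fires. -/
def TFSMG.Complete {S I O : Type*} (M : TFSMG S I O) : Prop :=
  ∀ s i (x : ℝ), 0 ≤ x → ∃ g o s', M.trans s i g o s' ∧ g.mem x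

/-- Determinism: at most one input/output transition for each state, input and clock value. -/
def TFSMG.Deterministic {S I O : Type*} (M : TFSMG S I O) : Prop :=
  ∀ s i (x : ℝ) g g' o o' s' s'', M.trans s i g o s' → M.trans s i g' o' s'' →
    g.mem x → g'.mem x → o = o' ∧ s' = s''

/-- `N ≥ max(M)`: every integer constant in the guards of `M` is at most `N`. -/
def TFSMG.boundedBy {S I O : Type*} (M : TFSMG S I O) (N : ℕ) : Prop :=
  ∀ s i g o s', M.trans s i g o s' → g.boundedBy N

/-- The unique interval of `𝕀_N` containing the delay `t`. -/
noncomputable def INdur (N : ℕ) (t : ℝ) : Guard :=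
  if (N : ℝ) < t then infG N
  else if ∃ n : ℕ, (n : ℝ) = t then ptG ⌊t⌋₊
  else opG ⌊t⌋₊

/-- The `𝕀_N`-abstraction of a timed word (the extra `ℝ` argument is the previous
timestamp, initially `0`). -/
noncomputable def INabs {A : Type*} (N : ℕ) : ℝ → List (A × ℝ) → List (A × Guard)
  | _, [] => []
  | t, (a, t') :: v => (a, INdur N (t' - t)) :: INabs N t' v

/-- The abstract FSM `A^N_M` of a TFSM with timed guards. -/
def absFSMG {S I O : Type*} (N : ℕ) (M : TFSMG S I O) : FSM (I × Guard) O S where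
  trans s p o s' := p.2 ∈ IN N ∧ ∃ g, M.trans s p.1 g o s' ∧ p.2.subset g
  init := M.init

/-- `𝕀_N`-bisimulation between a TFSM with timed guards and an untimed FSM. -/
def INBisim {S I O R : Type*} (N : ℕ) (M : TFSMG S I O) (U : FSM (I × Guard) O R)
    (Rel : S → R → Prop) : Prop :=
  ∀ s r, Rel s r →
    (∀ i g o s', M.trans s i g o s' → ∀ J ∈ IN N, J.subset g →
        ∃ r', U.trans r (i, J) o r' ∧ Rel s' r') ∧
    (∀ i J o r', J ∈ IN N → U.trans r (i, J) o r' →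
        ∃ g s', M.trans s i g o s' ∧ J.subset g ∧ Rel s' r')

/-! ### TFSMs with timeouts -/

/-- A TFSM with timeouts; `timeout s = (s', none)` means timeout `∞`. -/
structure TFSMT (S I O : Type*) where
  trans : S → I → O → S → Prop
  init : S
  timeout : S → S × Option ℕ
  timeout_pos : ∀ s n, (timeout s).2 = some n → 0 < n

/-- The timed transition relation `(s,x) →t (s',x')`. -/
inductive TFSMT.Elapse {S I O : Type*} (M : TFSMT S I O) : S → ℝ → ℝ → S → ℝ → Prop
  | stay {s : S} {x t : ℝ} : 0 ≤ x → 0 ≤ t →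
      (∀ n, (M.timeout s).2 = some n → x + t < n) → TFSMT.Elapse M s x t s (x + t)
  | tmo {s : S} {x t : ℝ} {n : ℕ} : 0 ≤ x → 0 ≤ t → (M.timeout s).2 = some n →
      x + t = n → TFSMT.Elapse M s x t (M.timeout s).1 0
  | comp {s s' s'' : S} {x x' x'' t₁ t₂ : ℝ} :
      TFSMT.Elapse M s x t₁ s' x' → TFSMT.Elapse M s' x' t₂ s'' x'' →
      TFSMT.Elapse M s x (t₁ + t₂) s'' x''

/-- Input/output transition `(s,x) →(i,o) (s',0)`. -/
def TFSMT.IOTrans {S I O : Type*} (M : TFSMT S I O) (s : S) (x : ℝ) (i : I) (o : O)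
    (s' : S) : Prop :=
  M.trans s i o s' ∧ 0 ≤ x ∧ ∀ n, (M.timeout s).2 = some n → x < n

/-- Run of a TFSM with timeouts on a timed input word. -/
inductive TFSMT.RunFrom {S I O : Type*} (M : TFSMT S I O) :
    S → ℝ → List (I × ℝ) → List (O × ℝ) → S → Prop
  | nil (s : S) (t : ℝ) : TFSMT.RunFrom M s t [] [] s
  | cons {s s'' s' sf : S} {x t t' : ℝ} {i : I} {o : O} {v : List (I × ℝ)} {w : List (O × ℝ)} :
      M.Elapse s 0 (t' - t) s'' x → M.IOTrans s'' x i o s' →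
      TFSMT.RunFrom M s' t' v w sf →
      TFSMT.RunFrom M s t ((i, t') :: v) ((o, t') :: w) sf

/-- The behavior of `M`: `w ∈ B_M(v)`. -/
def TFSMT.Produces {S I O : Type*} (M : TFSMT S I O) (v : List (I × ℝ))
    (w : List (O × ℝ)) : Prop :=
  ∃ sf, M.RunFrom M.init 0 v w sf

def TFSMT.Complete {S I O : Type*} (M : TFSMT S I O) : Prop :=
  ∀ s i, ∃ o s', M.trans s i o s'

def TFSMT.Deterministic {S I O : Type*} (M : TFSMT S I O) : Prop :=
  ∀ s i o o' s' s'', M.trans s i o s' → M.trans s i o' s'' → o = o' ∧ s' = s''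

/-- The `𝟙`-abstraction of a timed word: `none` is the delay symbol `𝟙`
(the extra `ℝ` argument is the previous timestamp, initially `0`). -/
noncomputable def oneAbs {A : Type*} : ℝ → List (A × ℝ) → List (Option A)
  | _, [] => []
  | t, (a, t') :: v => List.replicate ⌊t' - t⌋₊ none ++ some a :: oneAbs t' v

/-- `𝟙`-bisimulation between a TFSM with timeouts and an untimed FSM
(`none` plays the role of `𝟙` in both alphabets). -/
def OneBisim {S I O R : Type*} (M : TFSMT S I O) (U : FSM (Option I) (Option O) R)
    (Rel : S → ℝ → R → Prop) : Prop :=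
  ∀ s x r, Rel s x r →
    (∀ t s' x', 0 ≤ t → ⌊x + t⌋₊ = ⌊x + 1⌋₊ → M.Elapse s x t s' x' →
        ∃ r', U.trans r none none r' ∧ Rel s' x' r') ∧
    (∀ r', U.trans r none none r' → ∀ t, 0 ≤ t → ⌊x + t⌋₊ = ⌊x + 1⌋₊ →
        ∃ s' x', M.Elapse s x t s' x' ∧ Rel s' x' r') ∧
    (∀ t i o s', 0 ≤ t → ⌊x⌋₊ = ⌊x + t⌋₊ → M.Elapse s x t s (x + t) →
        M.IOTrans s (x + t) i o s' → ∃ r', U.trans r (some i) (some o) r' ∧ Rel s' 0 r') ∧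
    (∀ i o r', U.trans r (some i) (some o) r' → ∀ t, 0 ≤ t → ⌊x⌋₊ = ⌊x + t⌋₊ →
        ∃ s', M.Elapse s x t s (x + t) ∧ M.IOTrans s (x + t) i o s' ∧ Rel s' 0 r')

/-- The `𝟙`-abstract FSM `A_M` of a TFSM with timeouts. -/
def oneAbsFSM {S I O : Type*} (M : TFSMT S I O) : FSM (Option I) (Option O) (S × ℕ) where
  trans p a b q :=
    (a = none ∧ b = none ∧
      ((q.1 = p.1 ∧ q.2 = p.2 + 1 ∧ ∃ m, (M.timeout p.1).2 = some m ∧ p.2 + 1 < m) ∨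
       (M.timeout p.1 = (q.1, some (p.2 + 1)) ∧ q.2 = 0) ∨
       (p.2 = 0 ∧ (M.timeout p.1).2 = none ∧ q = p))) ∨
    (∃ i o, a = some i ∧ b = some o ∧ M.trans p.1 i o q.1 ∧ q.2 = 0)
  init := (M.init, 0)

/-- One step of the timeout function (only from states with a finite timeout). -/
def TFSMT.TimeoutStep {S I O : Type*} (M : TFSMT S I O) (s s' : S) : Prop :=
  (M.timeout s).2 ≠ none ∧ s' = (M.timeout s).1

/-- No cycles of timeout transitions. -/
def TFSMT.LoopFree {S I O : Type*} (M : TFSMT S I O) : Prop :=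
  ∀ s, ¬ Relation.TransGen M.TimeoutStep s s

/-! ### TFSMs with timed guards and timeouts -/

/-- A TFSM with both timed guards and timeouts. -/
structure TFSMGT (S I O : Type*) where
  trans : S → I → Guard → O → S → Prop
  init : S
  timeout : S → S × Option ℕ

/-- The timed transition relation `(s,x) →t (s',x')`. -/
inductive TFSMGT.Elapse {S I O : Type*} (M : TFSMGT S I O) : S → ℝ → ℝ → S → ℝ → Prop
  | stay {s : S} {x t : ℝ} : 0 ≤ x → 0 ≤ t →
      (∀ n, (M.timeout s).2 = some n → x + t < n) → TFSMGT.Elapse M s x t s (x + t)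
  | tmo {s : S} {x t : ℝ} {n : ℕ} : 0 ≤ x → 0 ≤ t → (M.timeout s).2 = some n →
      x + t = n → TFSMGT.Elapse M s x t (M.timeout s).1 0
  | comp {s s' s'' : S} {x x' x'' t₁ t₂ : ℝ} :
      TFSMGT.Elapse M s x t₁ s' x' → TFSMGT.Elapse M s' x' t₂ s'' x'' →
      TFSMGT.Elapse M s x (t₁ + t₂) s'' x''

/-- Input/output transition `(s,x) →(i,o) (s',0)`. -/
def TFSMGT.IOTrans {S I O : Type*} (M : TFSMGT S I O) (s : S) (x : ℝ) (i : I) (o : O)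
    (s' : S) : Prop :=
  (∃ g, M.trans s i g o s' ∧ g.mem x) ∧ 0 ≤ x ∧ ∀ n, (M.timeout s).2 = some n → x < n

/-- Run of a TFSM with timed guards and timeouts on a timed input word. -/
inductive TFSMGT.RunFrom {S I O : Type*} (M : TFSMGT S I O) :
    S → ℝ → List (I × ℝ) → List (O × ℝ) → S → Prop
  | nil (s : S) (t : ℝ) : TFSMGT.RunFrom M s t [] [] s
  | cons {s s'' s' sf : S} {x t t' : ℝ} {i : I} {o : O} {v : List (I × ℝ)} {w : List (O × ℝ)} :
      M.Elapse s 0 (t' - t) s'' x → M.IOTrans s'' x i o s' →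
      TFSMGT.RunFrom M s' t' v w sf →
      TFSMGT.RunFrom M s t ((i, t') :: v) ((o, t') :: w) sf

def TFSMGT.Produces {S I O : Type*} (M : TFSMGT S I O) (v : List (I × ℝ))
    (w : List (O × ℝ)) : Prop :=
  ∃ sf, M.RunFrom M.init 0 v w sf

def TFSMGT.Complete {S I O : Type*} (M : TFSMGT S I O) : Prop :=
  ∀ s i (x : ℝ), 0 ≤ x → (∀ n, (M.timeout s).2 = some n → x < n) →
    ∃ g o s', M.trans s i g o s' ∧ g.mem x

def TFSMGT.Deterministic {S I O : Type*} (M : TFSMGT S I O) : Prop :=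
  ∀ s i (x : ℝ) g g' o o' s' s'', M.trans s i g o s' → M.trans s i g' o' s'' →
    g.mem x → g'.mem x → o = o' ∧ s' = s''

/-- `N ≥ max(M)`: all guard constants and all finite timeouts of `M` are at most `N`. -/
def TFSMGT.boundedBy {S I O : Type*} (M : TFSMGT S I O) (N : ℕ) : Prop :=
  (∀ s i g o s', M.trans s i g o s' → g.boundedBy N) ∧
  (∀ s m, (M.timeout s).2 = some m → m ≤ N)

/-- `N = max(M)`: `N` is the greatest integer constant appearing in `M`. -/
def TFSMGT.maxConst {S I O : Type*} (M : TFSMGT S I O) (N : ℕ) : Prop :=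
  M.boundedBy N ∧ ∀ N', M.boundedBy N' → N ≤ N'

/-- Number of `𝕥` symbols abstracting a delay `t`. -/
noncomputable def tNum (t : ℝ) : ℕ :=
  if ∃ n : ℕ, (n : ℝ) = t then 2 * ⌊t⌋₊ else 2 * ⌊t⌋₊ + 1

/-- The `𝕥`-abstraction of a timed word: `none` is the delay symbol `𝕥`
(the extra `ℝ` argument is the previous timestamp, initially `0`). -/
noncomputable def tAbs {A : Type*} : ℝ → List (A × ℝ) → List (Option A)
  | _, [] => []
  | t, (a, t') :: v => List.replicate (tNum (t' - t)) none ++ some a :: tAbs t' v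

/-- `𝕥`-bisimulation between a TFSM with timed guards and timeouts and an untimed FSM. -/
def TBisim {S I O R : Type*} (M : TFSMGT S I O) (U : FSM (Option I) (Option O) R)
    (Rel : S → ℝ → R → Prop) : Prop :=
  ∀ s x r, Rel s x r →
    (∀ t s' x', 0 < t → t < 1 → ((∃ n : ℕ, (n : ℝ) = x) ∨ ∃ n : ℕ, (n : ℝ) = x + t) →
        M.Elapse s x t s' x' → ∃ r', U.trans r none none r' ∧ Rel s' x' r') ∧
    (∀ r', U.trans r none none r' →
        ∀ t, 0 < t → t < 1 → ((∃ n : ℕ, (n : ℝ) = x) ∨ ∃ n : ℕ, (n : ℝ) = x + t) →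
        ∃ s' x', M.Elapse s x t s' x' ∧ Rel s' x' r') ∧
    (∀ i o s', M.IOTrans s x i o s' → ∃ r', U.trans r (some i) (some o) r' ∧ Rel s' 0 r') ∧
    (∀ i o r', U.trans r (some i) (some o) r' →
        ∃ s', M.IOTrans s x i o s' ∧ Rel s' 0 r')

/-- The `𝕥`-abstract FSM `A_M` of a TFSM with timed guards and timeouts. -/
def tAbsFSM {S I O : Type*} (N : ℕ) (M : TFSMGT S I O) :
    FSM (Option I) (Option O) (S × Guard) where
  trans p a b q :=
    (a = none ∧ b = none ∧
      ((∃ n, p.2 = ptG n ∧ q = (p.1, opG n) ∧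
          ∀ m, (M.timeout p.1).2 = some m → n + 1 ≤ m) ∨
       (∃ n, p.2 = opG n ∧ q = (p.1, ptG (n + 1)) ∧
          ∀ m, (M.timeout p.1).2 = some m → n + 1 < m) ∨
       (∃ n, p.2 = opG n ∧ M.timeout p.1 = (q.1, some (n + 1)) ∧ q.2 = ptG 0) ∨
       (p.2 = infG N ∧ (M.timeout p.1).2 = none ∧ q = p))) ∨
    (∃ i o, a = some i ∧ b = some o ∧ q.2 = ptG 0 ∧
      ∃ g, M.trans p.1 i g o q.1 ∧ p.2.subset g)
  init := (M.init, ptG 0)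

/-- The TFSM with timed guards `M2`: a single state `q0 = ()`,
inputs `{i} = Unit`, outputs `{o1,o2}` (`false = o1`, `true = o2`), and
transitions `(q0, i, [0,2], o1, q0)` and `(q0, i, (2,∞), o2, q0)`. -/
def M2 : TFSMG Unit Unit Bool where
  trans _ _ g o _ :=
    (g = ⟨0, some 2, true, true⟩ ∧ o = false) ∨
    (g = ⟨2, none, false, false⟩ ∧ o = true)
  init := ()

lemma elapse_inv {S I O : Type*} {M : TFSMT S I O} {s s' : S} {x t x' : ℝ}
    (h : M.Elapse s x t s' x') : 0 ≤ x' ∧ ∃ k : ℕ, x + t = x' + k := by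
  induction h with
  | stay hx ht _ => exact ⟨by linarith, 0, by simp⟩
  | tmo hx ht hn he => exact ⟨le_rfl, _, by rw [he, zero_add]⟩
  | comp h1 h2 ih1 ih2 =>
      obtain ⟨hx1, k1, e1⟩ := ih1
      obtain ⟨hx2, k2, e2⟩ := ih2
      exact ⟨hx2, k1 + k2, by push_cast; linarith⟩

/-- No complete deterministic TFSM with timeouts (with a finite
state set) has the same behavior as `M2`. -/
theorem statement15 :
    ∀ (S' : Type) [Finite S'] (M' : TFSMT S' Unit Bool),
      M'.Complete → M'.Deterministic →
      ¬ (∀ (v : List (Unit × ℝ)) (w : List (Bool × ℝ)), IsTimedWord v →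
          (M2.Produces v w ↔ M'.Produces v w)) := by
  intro S' _ M' _hC _hD h
  have hv2 : IsTimedWord [((() : Unit), (2 : ℝ))] := by
    constructor
    · exact List.isChain_singleton _
    · rintro p hp
      simp only [List.mem_singleton] at hp
      subst hp; norm_num
  have hv25 : IsTimedWord [((() : Unit), (5/2 : ℝ))] := by
    constructor
    · exact List.isChain_singleton _
    · rintro p hp
      simp only [List.mem_singleton] at hp
      subst hp; norm_num
  -- M2 produces output false at time 2
  have hM2 : M2.Produces [((() : Unit), (2 : ℝ))] [(false, (2 : ℝ))] := by
    refine ⟨(), TFSMG.RunFrom.cons ?_ (TFSMG.RunFrom.nil _ _)⟩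
    refine ⟨⟨0, some 2, true, true⟩, Or.inl ⟨rfl, rfl⟩, ?_⟩
    constructor
    · norm_num
    · norm_num
  -- hence so does M'
  obtain ⟨sf, hrun⟩ := (h _ _ hv2).mp hM2
  cases hrun with
  | cons hE hIO hrest =>
    rename_i s'' s' x
    obtain ⟨htr, hx0, hlt⟩ := hIO
    obtain ⟨hx0', k, hk⟩ := elapse_inv hE
    -- hk : 0 + (2 - 0) = x + k
    have hxk : x + (k : ℝ) = 2 := by linarith
    have key : ∀ n, (M'.timeout s'').2 = some n → x + 1/2 < (n : ℝ) := by
      intro n hn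
      have hxn := hlt n hn
      have hn1 := M'.timeout_pos s'' n hn
      have hk2 : k ≤ 2 := by
        by_contra hc
        push_neg at hc
        have : (3 : ℝ) ≤ (k : ℝ) := by exact_mod_cast hc
        linarith
      interval_cases k
      · -- k = 0, x = 2
        have hx2 : x = 2 := by push_cast at hxk; linarith
        have h2n : (2 : ℕ) < n := by
          have : (2 : ℝ) < n := by rw [← hx2]; exact hxn
          exact_mod_cast this
        have : (3 : ℝ) ≤ n := by exact_mod_cast h2n
        linarith
      · -- k = 1, x = 1
        have hx1 : x = 1 := by push_cast at hxk; linarith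
        have h1n : (1 : ℕ) < n := by
          have : (1 : ℝ) < n := by rw [← hx1]; exact hxn
          exact_mod_cast this
        have : (2 : ℝ) ≤ n := by exact_mod_cast h1n
        linarith
      · -- k = 2, x = 0
        have hx00 : x = 0 := by push_cast at hxk; linarith
        have : (1 : ℝ) ≤ n := by exact_mod_cast hn1
        linarith
    -- build a run of M' on input at time 5/2 producing false
    have hstay : M'.Elapse s'' x (1/2) s'' (x + 1/2) :=
      TFSMT.Elapse.stay hx0 (by norm_num) key
    have hE' : M'.Elapse M'.init 0 ((5/2 : ℝ) - 0) s'' (x + 1/2) := by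
      have heq : (5/2 : ℝ) - 0 = (2 - 0) + 1/2 := by norm_num
      rw [heq]
      exact TFSMT.Elapse.comp hE hstay
    have hIO' : M'.IOTrans s'' (x + 1/2) () false s' :=
      ⟨htr, by linarith, key⟩
    have hM'25 : M'.Produces [((() : Unit), (5/2 : ℝ))] [(false, (5/2 : ℝ))] :=
      ⟨s', TFSMT.RunFrom.cons hE' hIO' (TFSMT.RunFrom.nil _ _)⟩
    -- so M2 produces false at time 5/2: contradiction
    obtain ⟨u, hr⟩ := (h _ _ hv25).mpr hM'25
    cases hr with
    | cons hIO2 hrest2 =>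
      obtain ⟨g, hg, hmem⟩ := hIO2
      rcases hg with ⟨rfl, -⟩ | ⟨-, hfo⟩
      · obtain ⟨-, hmem2⟩ := hmem
        simp only [Guard.mem] at hmem2
        norm_num at hmem2
      · exact Bool.false_ne_true hfo

end TFSMPaper
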